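/- arXiv:2501.02709 — 5 statements merged into one kernel-verified Lean document; each statement's English description precedes it below -/
import Mathlib

section
/- For any quasimetric d on a finite state space S and any function w : S × S → S satisfying d(s, w(s,g)) + d(w(s,g), g) = d(s,g) for all s,g (a quasimetric planner), the greedy policy π(s,g) = argmin_a d(s,a,g) can be chosen so that π(s,g) = π(s, w(s,g)), i.e., the greedy policy is planning invariant: argmin_a d(s,a,w(s,g)) ⊆ argmin_a d(s,a,g). -/
/-- Greedy quasimetric policies are planning invariant:
for a quasimetric planner `w`, any action minimizing `a ↦ d s a (w s g)`
also minimizes `a ↦ d s a g`. -/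
theorem greedy_quasimetric_policy_planning_invariant
    {S A : Type*} [Fintype S] [Fintype A] [Nonempty S] [Nonempty A]
    (d : S → A → S → ℝ) (ds : S → S → ℝ)
    (hds : ∀ s g, ds s g = ⨅ a : A, d s a g)
    (hdiag : ∀ s, ds s s = 0)
    (hpos : ∀ s g, s ≠ g → 0 < ds s g)
    (htri : ∀ s w g, ds s g ≤ ds s w + ds w g)
    (hatri : ∀ s a w g, d s a g ≤ d s a w + ds w g)
    (hopt : ∀ s a g, ∃ w : S, d s a g = d s a w + ds w g)
    (w : S → S → S)
    (hplan : ∀ s g, ds s (w s g) + ds (w s g) g = ds s g) :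
    ∀ s g (a : A), (∀ a' : A, d s a (w s g) ≤ d s a' (w s g)) →
      (∀ a' : A, d s a g ≤ d s a' g) := by
  intro s g a ha a'
  have hbdd : ∀ t : S, BddBelow (Set.range fun b : A => d s b t) :=
    fun t => (Set.finite_range _).bddBelow
  have h1 : d s a (w s g) = ds s (w s g) := by
    refine le_antisymm ?_ ?_
    · rw [hds]; exact le_ciInf ha
    · rw [hds]; exact ciInf_le (hbdd _) a
  calc d s a g ≤ d s a (w s g) + ds (w s g) g := hatri s a (w s g) g
    _ = ds s g := by rw [h1, hplan]
    _ ≤ d s a' g := by rw [hds]; exact ciInf_le (hbdd _) a'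
end

section
/- Let d be a quasimetric with action-augmented version d(s,a,g) satisfying d(s,a,g) = min_{w} [d(s,a,w) + d(w,g)] for all s,a,g. If w* minimizes w ↦ d(s,w) + d(w,g) (so d(s,w*) + d(w*,g) = d(s,g)), then every action a minimizing d(s,a,w*) also minimizes a ↦ d(s,a,g). -/
/-- If `d(s,a,g) = min_w [d(s,a,w) + d(w,g)]` and `w*` attains
`min_w [d(s,w) + d(w,g)] = d(s,g)`, then every action minimizing `d(s,·,w*)`
also minimizes `d(s,·,g)`. -/
theorem action_minimizer_through_optimal_waypoint
    {S A : Type*} [Fintype S] [Fintype A] [Nonempty S] [Nonempty A]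
    (d : S → A → S → ℝ) (ds : S → S → ℝ)
    (hds : ∀ s g, ds s g = ⨅ a : A, d s a g)
    (hrelax : ∀ s a g, d s a g = ⨅ w : S, (d s a w + ds w g))
    (s g wstar : S)
    (hwstar : ds s wstar + ds wstar g = ds s g)
    (hmin : ∀ w : S, ds s g ≤ ds s w + ds w g) :
    ∀ a : A, (∀ a' : A, d s a wstar ≤ d s a' wstar) →
      (∀ a' : A, d s a g ≤ d s a' g) := by
  intro a ha a'
  have h1 : d s a wstar = ds s wstar := by
    rw [hds]
    exact le_antisymm (le_ciInf ha) (ciInf_le (Set.Finite.bddBelow (Set.finite_range _)) a)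
  have h2 : d s a g ≤ d s a wstar + ds wstar g := by
    rw [hrelax s a g]
    exact ciInf_le (Set.Finite.bddBelow (Set.finite_range _)) wstar
  have h3 : ds s g ≤ d s a' g := by
    rw [hds]
    exact ciInf_le (Set.Finite.bddBelow (Set.finite_range _)) a'
  calc d s a g ≤ ds s wstar + ds wstar g := by rw [← h1]; exact h2
    _ = ds s g := hwstar
    _ ≤ d s a' g := h3
end

section
/- There exists a finite deterministic goal-conditioned MDP and a policy that is optimal for all start-goal pairs at distance at most H but suboptimal for some pair at distance H+1; hence optimality on short horizons does not imply optimality on longer horizons without planning invariance. -/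
/-!
The MDP is the cycle `ℤ/(H+2)` with the actions "advance" (`true`) and "stay" (`false`), so the
distance from `z` to `g` is `(g - z).val`. The policy advances except at the unique state at
distance `H + 1` from the goal, where it stays. Along an optimal path towards a goal at distance
at most `H` the distance only decreases, so the policy never stays; from the start at
distance `H + 1` it stays forever.
-/

def ReachIn {S A : Type*} (f : S → A → S) : ℕ → S → S → Prop
  | 0, s, g => s = g
  | n + 1, s, g => ∃ a, ReachIn f n (f s a) g

namespace ReachIn

variable {S A : Type*} {f : S → A → S}

theorem iterate (p : S → A) (n : ℕ) (s : S) :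
    ReachIn f n s ((fun z => f z (p z))^[n] s) := by
  induction n generalizing s with
  | zero => rfl
  | succ n ih => exact ⟨p s, ih (f s (p s))⟩

theorem le_add_of_forall_le_add_one {φ : S → ℕ} (hφ : ∀ z a, φ z ≤ φ (f z a) + 1)
    {n : ℕ} {s g : S} (h : ReachIn f n s g) : φ s ≤ n + φ g := by
  induction n generalizing s with
  | zero => cases h; omega
  | succ n ih =>
    obtain ⟨a, ha⟩ := h
    have := hφ s a
    have := ih ha
    omega

end ReachIn

namespace CycleMDP

variable (H : ℕ)

def step (z : ZMod (H + 2)) (advance : Bool) : ZMod (H + 2) :=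
  if advance then z + 1 else z

def dist (z g : ZMod (H + 2)) : ℕ := (g - z).val

def lazyPolicy (z g : ZMod (H + 2)) : Bool := dist H z g ≠ H + 1

theorem dist_le_dist_step_add_one (g z : ZMod (H + 2)) (a : Bool) :
    dist H z g ≤ dist H (step H z a) g + 1 := by
  cases a with
  | false => simp [step]
  | true =>
    have h : g - z = g - (z + 1) + 1 := by ring
    calc dist H z g = (g - (z + 1) + 1).val := by rw [dist, ← h]
      _ ≤ (g - (z + 1)).val + (1 : ZMod (H + 2)).val := ZMod.val_add_le _ _
      _ = dist H (step H z true) g + 1 := by rw [ZMod.val_one'' (by omega)]; rfl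

theorem iterate_step_advance (n : ℕ) (s : ZMod (H + 2)) :
    (fun z => step H z true)^[n] s = s + n := by
  simp only [step, if_true, add_right_iterate_apply, nsmul_one]

theorem isLeast_dist (s g : ZMod (H + 2)) :
    IsLeast {n | ReachIn (step H) n s g} (dist H s g) := by
  refine ⟨?_, fun n hn => ?_⟩
  · have h := ReachIn.iterate (f := step H) (fun _ => true) (dist H s g) s
    rwa [iterate_step_advance, dist, ZMod.natCast_zmod_val, add_sub_cancel] at h
  · simpa [dist] using ReachIn.le_add_of_forall_le_add_one (dist_le_dist_step_add_one H g) hn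

theorem dist_add_one {z g : ZMod (H + 2)} (h : 0 < dist H z g) :
    dist H (z + 1) g = dist H z g - 1 := by
  have h1 : (1 : ZMod (H + 2)).val = 1 := ZMod.val_one'' (by omega)
  rw [dist, dist, ← sub_sub, ZMod.val_sub (by rw [h1]; exact h), h1]

theorem iterate_lazyPolicy_of_le {g x : ZMod (H + 2)} {k : ℕ} (hk : k ≤ dist H x g)
    (hx : dist H x g ≤ H) : (fun z => step H z (lazyPolicy H z g))^[k] x = x + k := by
  induction k generalizing x with
  | zero => simp
  | succ k ih =>
    have hd : dist H (x + 1) g = dist H x g - 1 := dist_add_one H (by omega)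
    have hstep : step H x (lazyPolicy H x g) = x + 1 := by
      rw [lazyPolicy, decide_eq_true (by omega : dist H x g ≠ H + 1)]
      rfl
    rw [Function.iterate_succ_apply, hstep, ih (by omega) (by omega), Nat.cast_succ,
      add_assoc, add_comm 1]

theorem lazyPolicy_optimal {x g : ZMod (H + 2)} (hx : dist H x g ≤ H) :
    (fun z => step H z (lazyPolicy H z g))^[dist H x g] x = g := by
  rw [iterate_lazyPolicy_of_le H le_rfl hx, dist, ZMod.natCast_zmod_val, add_sub_cancel]

theorem dist_zero_neg_one : dist H 0 (-1) = H + 1 := by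
  rw [dist, sub_zero]
  exact ZMod.val_neg_one (H + 1)

theorem iterate_lazyPolicy_zero_neg_one (n : ℕ) :
    (fun z => step H z (lazyPolicy H z (-1)))^[n] 0 = 0 :=
  Function.iterate_fixed (by simp [step, lazyPolicy, dist_zero_neg_one]) n

end CycleMDP

/-- Horizon generalization is nontrivial: for every horizon `H`
there is a finite deterministic goal-conditioned MDP and a policy optimal on
all pairs at distance at most `H` but suboptimal on some pair at distance
`H + 1`. -/
theorem horizon_generalization_nontrivial (H : ℕ) :
    ∃ (S A : Type) (_ : Fintype S) (_ : Fintype A) (hA : 2 ≤ Nat.card A)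
      (f : S → A → S) (d : S → S → ℕ)
      (_ : ∀ s g, IsLeast {n : ℕ | ReachIn f n s g} (d s g))
      (π : S → S → A) (s g' : S),
      (∀ x y : S, d x y ≤ H → (fun z => f z (π z y))^[d x y] x = y) ∧
        d s g' = H + 1 ∧
        ¬ (fun z => f z (π z g'))^[d s g'] s = g' := by
  refine ⟨ZMod (H + 2), Bool, inferInstance, inferInstance, by simp, CycleMDP.step H,
    CycleMDP.dist H, CycleMDP.isLeast_dist H, CycleMDP.lazyPolicy H, 0, -1,
    fun _ _ => CycleMDP.lazyPolicy_optimal H, CycleMDP.dist_zero_neg_one H, ?_⟩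
  rw [CycleMDP.iterate_lazyPolicy_zero_neg_one]
  intro h
  simpa [← h, CycleMDP.dist] using CycleMDP.dist_zero_neg_one H
end

section
/- If Success : ℝ≥0 → [0,1] is monotonically nonincreasing with Success(c) = 1 for c ≤ c₀ and Success(2^n c₀) ≥ η^n for all n ≥ 0 with η ≥ 1/2, then ∫_{0}^{∞} Success(c) dc = ∞. -/
/-!
Split `(0, ∞)` into the dyadic blocks `(2ⁿ c₀, 2ⁿ⁺¹ c₀]`. By monotonicity `Success ≥ ηⁿ⁺¹` on the
`n`-th block, which has length `2ⁿ c₀`, so the block contributes at least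
`η (2η)ⁿ c₀ ≥ c₀ / 2`. Infinitely many blocks each contributing `c₀ / 2` make the integral infinite.
-/

open MeasureTheory Set
open scoped ENNReal

theorem Antitone.ofReal_mul_volume_le_setLIntegral_Ioc {f : ℝ → ℝ} (hf : Antitone f) (a b : ℝ) :
    ENNReal.ofReal (f b) * volume (Ioc a b) ≤ ∫⁻ c in Ioc a b, ENNReal.ofReal (f c) := by
  rw [← setLIntegral_const]
  exact setLIntegral_mono' measurableSet_Ioc fun c hc => ENNReal.ofReal_le_ofReal (hf hc.2)

theorem lintegral_Ioi_eq_top_of_le_setLIntegral_Ioc_succ {a : ℕ → ℝ} (ha : Monotone a)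
    (ha₀ : 0 ≤ a 0) {f : ℝ → ℝ≥0∞} {ε : ℝ≥0∞} (hε : ε ≠ 0)
    (hblock : ∀ n, ε ≤ ∫⁻ c in Ioc (a n) (a (n + 1)), f c) :
    ∫⁻ c in Ioi 0, f c = ∞ := by
  have hsub : (⋃ n, Ioc (a n) (a (n + 1))) ⊆ Ioi 0 :=
    iUnion_subset fun n => Ioc_subset_Ioi_self.trans (Ioi_subset_Ioi (ha₀.trans (ha n.zero_le)))
  have hdisj : Pairwise (Function.onFun Disjoint fun n => Ioc (a n) (a (n + 1))) := by
    simpa using ha.pairwise_disjoint_on_Ioc_succ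
  refine top_le_iff.mp ?_
  calc ∞ = ∑' _ : ℕ, ε := (ENNReal.tsum_const_eq_top_of_ne_zero hε).symm
    _ ≤ ∑' n, ∫⁻ c in Ioc (a n) (a (n + 1)), f c := ENNReal.tsum_le_tsum hblock
    _ = ∫⁻ c in ⋃ n, Ioc (a n) (a (n + 1)), f c :=
      (lintegral_iUnion (fun _ => measurableSet_Ioc) hdisj f).symm
    _ ≤ ∫⁻ c in Ioi 0, f c := lintegral_mono_set hsub

theorem half_le_pow_succ_mul_two_pow {η : ℝ} (hη : 1 / 2 ≤ η) (n : ℕ) :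
    (1 / 2 : ℝ) ≤ η ^ (n + 1) * 2 ^ n := by
  have h2η : (1 : ℝ) ≤ (2 * η) ^ n := one_le_pow₀ (by linarith)
  calc (1 / 2 : ℝ) ≤ η * (2 * η) ^ n := by nlinarith
    _ = η ^ (n + 1) * 2 ^ n := by ring

theorem integral_success_infinite_general
    (Success : ℝ → ℝ) (c₀ η : ℝ)
    (hc₀ : 0 < c₀) (hη₁ : 1 / 2 ≤ η)
    (hanti : Antitone Success)
    (hdecay : ∀ n : ℕ, η ^ n ≤ Success (2 ^ n * c₀)) :
    ∫⁻ c in Set.Ioi (0 : ℝ), ENNReal.ofReal (Success c) = ∞ := by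
  have hblocks : Monotone fun n : ℕ => (2 : ℝ) ^ n * c₀ := fun m n hmn =>
    mul_le_mul_of_nonneg_right (pow_le_pow_right₀ one_le_two hmn) hc₀.le
  refine lintegral_Ioi_eq_top_of_le_setLIntegral_Ioc_succ hblocks (by positivity)
    (ENNReal.ofReal_pos.mpr (half_pos hc₀)).ne' fun n => ?_
  have hlength : (2 : ℝ) ^ (n + 1) * c₀ - 2 ^ n * c₀ = 2 ^ n * c₀ := by ring
  calc ENNReal.ofReal (c₀ / 2) ≤ ENNReal.ofReal (η ^ (n + 1) * (2 ^ n * c₀)) := by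
        refine ENNReal.ofReal_le_ofReal ?_
        nlinarith [half_le_pow_succ_mul_two_pow hη₁ n]
    _ ≤ ENNReal.ofReal (Success (2 ^ (n + 1) * c₀)) *
          volume (Ioc (2 ^ n * c₀) (2 ^ (n + 1) * c₀)) := by
        rw [Real.volume_Ioc, hlength, ← ENNReal.ofReal_mul' (by positivity)]
        exact ENNReal.ofReal_le_ofReal (mul_le_mul_of_nonneg_right (hdecay (n + 1)) (by positivity))
    _ ≤ _ := hanti.ofReal_mul_volume_le_setLIntegral_Ioc _ _

/-- If `Success` is a nonincreasing function into `[0,1]`,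
equal to `1` up to `c₀` and with `Success (2^n c₀) ≥ η^n` for `η ≥ 1/2`,
then its integral over `[0, ∞)` is infinite. -/
theorem integral_success_infinite
    (Success : ℝ → ℝ) (c₀ η : ℝ)
    (hc₀ : 0 < c₀) (hη₁ : 1 / 2 ≤ η) (hη₂ : η ≤ 1)
    (hbounds : ∀ c, 0 ≤ Success c ∧ Success c ≤ 1)
    (hanti : Antitone Success)
    (hbase : ∀ c ≤ c₀, Success c = 1)
    (hdecay : ∀ n : ℕ, η ^ n ≤ Success (2 ^ n * c₀)) :
    ∫⁻ c in Set.Ioi (0 : ℝ), ENNReal.ofReal (Success c) = ∞ :=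
  integral_success_infinite_general Success c₀ η hc₀ hη₁ hanti hdecay
end

section
/- Given a quasimetric d on finite S and any state-goal pair (s,g) with d(s,g) > 0, for every waypoint w attaining min_w [d(s,w) + d(w,g)], if additionally d has no 'shortcuts' beyond the triangle inequality for triples through w, then replacing the goal g by w does not change the set of d-optimal first actions: argmin_a [d(s,a,w)] ∩ argmin_a [d(s,a,g)] is nonempty, where d(s,a,g) := 1 + d(f(s,a), g) for deterministic dynamics f. -/
theorem ReachIn.trans {S A : Type*} (f : S → A → S) :
    ∀ (m n : ℕ) (x w g : S), ReachIn f m x w → ReachIn f n w g →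
      ReachIn f (m + n) x g := by
  intro m
  induction m with
  | zero => intro n x w g h1 h2; cases h1; simpa using h2
  | succ k ih =>
    intro n x w g h1 h2
    obtain ⟨a, ha⟩ := h1
    rw [Nat.add_right_comm]
    exact ⟨a, ih n _ w g ha h2⟩

/-- For an optimal waypoint `w` (with `d s w + d w g = d s g`,
`s ≠ w ≠ g`), replacing the goal `g` by the waypoint `w` does not change the
optimal first actions: any action `a` optimal toward `w` (`1 + d (f s a) w =
d s w`) is also optimal toward `g` (`1 + d (f s a) g = d s g`); in particular
the two argmin sets intersect. -/
theorem waypoint_preserves_optimal_first_actions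
    {S A : Type*} [Fintype S] [Fintype A] [Nonempty S] [Nonempty A]
    (f : S → A → S) (d : S → S → ℕ)
    (hd : ∀ s g, IsLeast {n : ℕ | ReachIn f n s g} (d s g))
    (s w g : S)
    (hsplit : d s w + d w g = d s g)
    (hsw : s ≠ w) (hwg : w ≠ g) (hpos : 0 < d s g) :
    ∀ a : A, 1 + d (f s a) w = d s w → 1 + d (f s a) g = d s g := by
  intro a ha
  -- lower bound: d s g ≤ 1 + d (f s a) g
  have hreach : ReachIn f (1 + d (f s a) g) s g := by
    rw [Nat.add_comm]
    exact ⟨a, (hd (f s a) g).1⟩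
  have hlb : d s g ≤ 1 + d (f s a) g := (hd s g).2 hreach
  -- triangle: d (f s a) g ≤ d (f s a) w + d w g
  have htri : d (f s a) g ≤ d (f s a) w + d w g :=
    (hd (f s a) g).2 (ReachIn.trans f _ _ _ w g (hd (f s a) w).1 (hd w g).1)
  omega
end
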